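/- Let B₁ : ℝ → ℝ be N-Lipschitz and B₂ differentiable with B₂' = B₁. Define for x ≠ y: b(x,y) := (B₂(x) − B₂(y) − ½(B₁(x) + B₁(y))(x − y))/(x − y)². Then for x, x', y ∈ ℝ with |x − x'| ≤ |x − y|/2 and x' ≠ y, one has |b(x,y) − b(x',y)| ≤ C·N·|x − x'|/|x − y| for an absolute constant C. -/

import Mathlib

/-!
Write `E(a, b) = B₂ a - B₂ b - (B₁ a + B₁ b) / 2 * (a - b)` for the trapezoid-rule error, so that
`b(x, y) = E(x, y) / (x - y)²`. The mean value theorem for `B₂ - (B₁ a + B₁ b) / 2 * id`, whose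
derivative is bounded by `N |a - b| / 2` between `a` and `b`, gives `|E(a, b)| ≤ N (a - b)² / 2`; and
`E(x, y) - E(x', y)` is `E(x, x')` plus increments of `B₁` of size `N |x - x'| |x - y|`. As
`|x' - y|` is comparable to `|x - y|`, splitting `b(x, y) - b(x', y)` into
`(E(x, y) - E(x', y)) / (x - y)²` and `E(x', y) ((x - y)⁻² - (x' - y)⁻²)` gives `C = 5 / 2`.
-/

open Set

noncomputable def trapezoidError (f f' : ℝ → ℝ) (a b : ℝ) : ℝ :=
  f a - f b - (f' a + f' b) / 2 * (a - b)

lemma abs_sub_add_abs_sub_of_mem_uIcc {a b t : ℝ} (ht : t ∈ uIcc a b) :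
    |t - a| + |t - b| = |a - b| := by
  rcases mem_uIcc.1 ht with ⟨hat, htb⟩ | ⟨hbt, hta⟩
  · rw [abs_of_nonneg (sub_nonneg.2 hat), abs_of_nonpos (sub_nonpos.2 htb),
      abs_of_nonpos (sub_nonpos.2 (hat.trans htb))]
    ring
  · rw [abs_of_nonpos (sub_nonpos.2 hta), abs_of_nonneg (sub_nonneg.2 hbt),
      abs_of_nonneg (sub_nonneg.2 (hbt.trans hta))]
    ring

lemma abs_trapezoidError_le {N : ℝ} {f f' : ℝ → ℝ}
    (hLip : ∀ x y, |f' x - f' y| ≤ N * |x - y|) (hf : ∀ x, HasDerivAt f (f' x) x) (a b : ℝ) :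
    |trapezoidError f f' a b| ≤ N / 2 * (a - b) ^ 2 := by
  set m := (f' a + f' b) / 2 with hm
  have hderiv : ∀ t ∈ uIcc b a, HasDerivWithinAt (fun s ↦ f s - m * s) (f' t - m) (uIcc b a) t :=
    fun t _ ↦ (((hf t).sub ((hasDerivAt_id t).const_mul m)).congr_deriv (by simp)).hasDerivWithinAt
  have hbound : ∀ t ∈ uIcc b a, ‖f' t - m‖ ≤ N / 2 * |a - b| := by
    intro t ht
    have hsplit : f' t - m = ((f' t - f' a) + (f' t - f' b)) / 2 := by ring
    have hdist := abs_sub_add_abs_sub_of_mem_uIcc (uIcc_comm b a ▸ ht)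
    rw [Real.norm_eq_abs, hsplit, abs_div, abs_two]
    calc |f' t - f' a + (f' t - f' b)| / 2 ≤ (N * |t - a| + N * |t - b|) / 2 := by
          gcongr; exact (abs_add_le _ _).trans (add_le_add (hLip t a) (hLip t b))
      _ = N / 2 * |a - b| := by rw [← mul_add, hdist]; ring
  have := (convex_uIcc b a).norm_image_sub_le_of_norm_hasDerivWithin_le hderiv hbound
    left_mem_uIcc right_mem_uIcc
  calc |trapezoidError f f' a b| = ‖(f a - m * a) - (f b - m * b)‖ := by
        rw [Real.norm_eq_abs, trapezoidError, hm]; ring_nf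
    _ ≤ N / 2 * |a - b| * ‖a - b‖ := this
    _ = N / 2 * (a - b) ^ 2 := by rw [Real.norm_eq_abs, mul_assoc, abs_mul_abs_self]; ring

lemma trapezoidError_sub_trapezoidError (f f' : ℝ → ℝ) (x x' y : ℝ) :
    trapezoidError f f' x y - trapezoidError f f' x' y =
      trapezoidError f f' x x' + ((f' x' - f' x) * (x - y) + (f' x - f' y) * (x - x')) / 2 := by
  unfold trapezoidError; ring

lemma abs_trapezoidError_sub_trapezoidError_le {N : ℝ} {f f' : ℝ → ℝ}
    (hLip : ∀ x y, |f' x - f' y| ≤ N * |x - y|) (hf : ∀ x, HasDerivAt f (f' x) x) (x x' y : ℝ) :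
    |trapezoidError f f' x y - trapezoidError f f' x' y| ≤
      N / 2 * (x - x') ^ 2 + N * |x - x'| * |x - y| := by
  rw [trapezoidError_sub_trapezoidError]
  have h₁ := abs_trapezoidError_le hLip hf x x'
  have h₂ : |(f' x' - f' x) * (x - y)| ≤ N * |x - x'| * |x - y| := by
    rw [abs_mul, abs_sub_comm x x']; gcongr; exact hLip x' x
  have h₃ : |(f' x - f' y) * (x - x')| ≤ N * |x - x'| * |x - y| := by
    rw [abs_mul, mul_right_comm]; gcongr; exact hLip x y
  calc _ ≤ |trapezoidError f f' x x'|
        + (|(f' x' - f' x) * (x - y)| + |(f' x - f' y) * (x - x')|) / 2 := by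
        refine (abs_add_le _ _).trans ?_
        rw [abs_div, abs_two]; gcongr; exact abs_add_le _ _
    _ ≤ _ := by linarith

lemma abs_div_sq_sub_div_sq_le {N u v p q : ℝ} (hp : p ≠ 0) (hq : q ≠ 0)
    (hpq : |p - q| ≤ |p| / 2) (huv : |u - v| ≤ N / 2 * (p - q) ^ 2 + N * |p - q| * |p|)
    (hv : |v| ≤ N / 2 * q ^ 2) :
    |u / p ^ 2 - v / q ^ 2| ≤ 5 / 2 * N * |p - q| / |p| := by
  have hP : 0 < |p| := abs_pos.2 hp
  have hp2 : 0 < p ^ 2 := pow_pos hP 2 |>.trans_eq (sq_abs p)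
  have hq2 : 0 < q ^ 2 := pow_pos (abs_pos.2 hq) 2 |>.trans_eq (sq_abs q)
  have hN : 0 ≤ N := by nlinarith [(abs_nonneg v).trans hv]
  have hsplit : u / p ^ 2 - v / q ^ 2 =
      ((u - v) + v / q ^ 2 * ((q - p) * (q + p))) / p ^ 2 := by
    field_simp; ring
  have hdiff : |u - v| ≤ 5 / 4 * N * |p - q| * |p| := by
    have : N / 2 * (p - q) ^ 2 ≤ N / 2 * (|p - q| * (|p| / 2)) := by
      rw [← sq_abs, sq]; gcongr
    linarith
  have hratio : |v / q ^ 2| ≤ N / 2 := by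
    rw [abs_div, abs_of_pos hq2, div_le_iff₀ hq2]; exact hv
  have hsum : |q + p| ≤ 5 / 2 * |p| := by
    calc |q + p| = |-(p - q) + 2 * p| := by ring_nf
      _ ≤ |p - q| + 2 * |p| := by
          refine (abs_add_le _ _).trans ?_; rw [abs_neg, abs_mul, abs_two]
      _ ≤ 5 / 2 * |p| := by linarith
  have hprod : |v / q ^ 2 * ((q - p) * (q + p))| ≤ 5 / 4 * N * |p - q| * |p| := by
    rw [abs_mul, abs_mul, abs_sub_comm q p]
    calc _ ≤ N / 2 * (|p - q| * (5 / 2 * |p|)) := by gcongr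
      _ = _ := by ring
  rw [hsplit, abs_div, abs_of_pos hp2, div_le_div_iff₀ hp2 hP, ← sq_abs p]
  calc _ ≤ (5 / 4 * N * |p - q| * |p| + 5 / 4 * N * |p - q| * |p|) * |p| := by
        gcongr; exact (abs_add_le _ _).trans (add_le_add hdiff hprod)
    _ = _ := by ring

theorem stmt7 :
    ∃ C : ℝ, 0 < C ∧
      ∀ (N : ℝ) (B₁ B₂ : ℝ → ℝ),
        (∀ x y : ℝ, |B₁ x - B₁ y| ≤ N * |x - y|) →
        (∀ x : ℝ, HasDerivAt B₂ (B₁ x) x) →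
        ∀ x x' y : ℝ, x ≠ y → x' ≠ y → |x - x'| ≤ |x - y| / 2 →
          |(B₂ x - B₂ y - (B₁ x + B₁ y) / 2 * (x - y)) / (x - y) ^ 2 -
            (B₂ x' - B₂ y - (B₁ x' + B₁ y) / 2 * (x' - y)) / (x' - y) ^ 2| ≤
              C * N * |x - x'| / |x - y| := by
  refine ⟨5 / 2, by norm_num, fun N B₁ B₂ hLip hB₂ x x' y hxy hx'y hclose ↦ ?_⟩
  have key := abs_div_sq_sub_div_sq_le (sub_ne_zero.2 hxy) (sub_ne_zero.2 hx'y)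
    (by rwa [sub_sub_sub_cancel_right])
    (by rw [sub_sub_sub_cancel_right]
        exact abs_trapezoidError_sub_trapezoidError_le hLip hB₂ x x' y)
    (abs_trapezoidError_le hLip hB₂ x' y)
  rwa [sub_sub_sub_cancel_right] at key
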